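/- arXiv:2212.12329 — 2 statements merged into one kernel-verified Lean document; each statement's English description precedes it below -/
import Mathlib

section
/- Let n ≥ 2, d ≥ 1, e ≥ 1. Let W : Fin e → Fin d → ℝ and c : Fin e → ℝ, and let E = 𝟙 − I be the n×n extraction matrix (all-ones minus identity). For a feature tensor F : Fin d → Matrix (Fin n) (Fin n) ℝ, define R(F) k i j = max 0 ((∑ m, W k m * F m i j) + c k) and the category-4 layer output Φ⁴(F) k = ((n − 1 : ℝ)^2)⁻¹ • (E * R(F) k * E), where * is matrix multiplication. Then Φ⁴ is permutation-equivariant: for every permutation σ of Fin n with permutation matrix P (P i j = 1 if σ i = j, else 0) and every F, Φ⁴(fun m => P * F m * Pᵀ) k = P * (Φ⁴(F) k) * Pᵀ for all k. -/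
open Matrix

/-!
Conjugating by the permutation matrix of `σ` is the reindexing `M ↦ M.submatrix σ σ`. The ReLU
layer acts entrywise, so it commutes with reindexing; the extraction matrix `𝟙 - I` is fixed by
it; and reindexing by an equivalence is multiplicative. Hence reindexing passes through
`E * R F k * E` and through the scalar `((n - 1)²)⁻¹`.
-/

namespace Matrix

variable {n α : Type*}

lemma eq_permMatrix_of_apply [DecidableEq n] [Zero α] [One α] {σ : Equiv.Perm n}
    {P : Matrix n n α} (hP : ∀ i j, P i j = if σ i = j then 1 else 0) : P = σ.permMatrix α := by
  ext i j
  simp [hP, PEquiv.toMatrix_apply, Equiv.toPEquiv_apply]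

lemma permMatrix_mul_mul_transpose [DecidableEq n] [Fintype n] [NonAssocSemiring α]
    (σ : Equiv.Perm n) (M : Matrix n n α) :
    σ.permMatrix α * M * (σ.permMatrix α)ᵀ = M.submatrix σ σ := by
  rw [PEquiv.toMatrix_toPEquiv_mul, transpose_permMatrix, Equiv.Perm.permMatrix,
    PEquiv.mul_toMatrix_toPEquiv, submatrix_submatrix]
  rfl

lemma submatrix_sub_one_of_forall_eq [DecidableEq n] [AddGroupWithOne α] {J : Matrix n n α}
    {a : α} (hJ : ∀ i j, J i j = a) (σ : Equiv.Perm n) : (J - 1).submatrix σ σ = J - 1 := by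
  ext i j
  simp [hJ, one_apply]

lemma mul_submatrix_mul_of_submatrix_eq [Fintype n] [NonUnitalNonAssocSemiring α]
    {E : Matrix n n α} {σ : Equiv.Perm n} (hE : E.submatrix σ σ = E) (M : Matrix n n α) :
    E * M.submatrix σ σ * E = (E * M * E).submatrix σ σ := by
  conv_lhs => rw [← hE]
  rw [submatrix_mul_equiv, submatrix_mul_equiv]

end Matrix

theorem stmt_9_general (n d e : ℕ)
    (W : Fin e → Fin d → ℝ) (c : Fin e → ℝ)
    (J E : Matrix (Fin n) (Fin n) ℝ)
    (hJ : ∀ i j, J i j = 1)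
    (hE : E = J - 1)
    (R : (Fin d → Matrix (Fin n) (Fin n) ℝ) → Fin e → Matrix (Fin n) (Fin n) ℝ)
    (hR : ∀ F k i j, R F k i j = max 0 ((∑ m, W k m * F m i j) + c k))
    (Φ4 : (Fin d → Matrix (Fin n) (Fin n) ℝ) → Fin e → Matrix (Fin n) (Fin n) ℝ)
    (hΦ4 : ∀ F k, Φ4 F k = (((n : ℝ) - 1) ^ 2)⁻¹ • (E * R F k * E))
    (σ : Equiv.Perm (Fin n)) (P : Matrix (Fin n) (Fin n) ℝ)
    (hP : ∀ i j, P i j = if σ i = j then 1 else 0)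
    (F : Fin d → Matrix (Fin n) (Fin n) ℝ) (k : Fin e) :
    Φ4 (fun m => P * F m * Pᵀ) k = P * Φ4 F k * Pᵀ := by
  obtain rfl := eq_permMatrix_of_apply hP
  have hEσ : E.submatrix σ σ = E := hE ▸ submatrix_sub_one_of_forall_eq hJ σ
  have hRσ : R (fun m => (F m).submatrix σ σ) k = (R F k).submatrix σ σ := by
    ext i j
    simp only [hR, submatrix_apply]
  simp only [permMatrix_mul_mul_transpose, hΦ4, hRσ, mul_submatrix_mul_of_submatrix_eq hEσ,
    submatrix_smul, Pi.smul_apply]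

theorem stmt_9 (n d e : ℕ) (hn : 2 ≤ n) (hd : 1 ≤ d) (he : 1 ≤ e)
    (W : Fin e → Fin d → ℝ) (c : Fin e → ℝ)
    (J E : Matrix (Fin n) (Fin n) ℝ)
    (hJ : ∀ i j, J i j = 1)
    (hE : E = J - 1)
    (R : (Fin d → Matrix (Fin n) (Fin n) ℝ) → Fin e → Matrix (Fin n) (Fin n) ℝ)
    (hR : ∀ F k i j, R F k i j = max 0 ((∑ m, W k m * F m i j) + c k))
    (Φ4 : (Fin d → Matrix (Fin n) (Fin n) ℝ) → Fin e → Matrix (Fin n) (Fin n) ℝ)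
    (hΦ4 : ∀ F k, Φ4 F k = (((n : ℝ) - 1) ^ 2)⁻¹ • (E * R F k * E))
    (σ : Equiv.Perm (Fin n)) (P : Matrix (Fin n) (Fin n) ℝ)
    (hP : ∀ i j, P i j = if σ i = j then 1 else 0)
    (F : Fin d → Matrix (Fin n) (Fin n) ℝ) (k : Fin e) :
    Φ4 (fun m => P * F m * Pᵀ) k = P * Φ4 F k * Pᵀ :=
  stmt_9_general n d e W c J E hJ hE R hR Φ4 hΦ4 σ P hP F k
end

section
/- (Theorem 1, permutation-equivariance of InterferenceNet, for a two-layer instance.) Let n ≥ 2 and e ≥ 1. Let E = 𝟙 − I be the n×n extraction matrix. Given a channel matrix G : Matrix (Fin n) (Fin n) ℝ, define the input feature tensor F₁ : Fin 1 → Matrix (Fin n) (Fin n) ℝ by F₁ 0 = G.map (Real.logb 10). Given weights W k' : Fin e → Fin 1 → ℝ and biases c k' : Fin e → ℝ for each category k' ∈ Fin 4, define R_{k'}(F₁) k i j = max 0 ((∑ m, W k' k m * F₁ m i j) + c k' k), and define the hidden feature tensor F₂, indexed by Option (Fin 4 × Fin e), by: F₂ none = G.map (Real.logb 10); F₂ (some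 (0, k)) = R₀(F₁) k; F₂ (some (1, k)) = (n − 1 : ℝ)⁻¹ • (E * R₁(F₁) k); F₂ (some (2, k)) = (n − 1 : ℝ)⁻¹ • (R₂(F₁) k * E); F₂ (some (3, k)) = ((n − 1 : ℝ)^2)⁻¹ • (E * R₃(F₁) k * E). Given final weights w : Option (Fin 4 × Fin e) → ℝ and bias c_f : ℝ, define Φ(G) : Fin n → ℝ by Φ(G) j = (∑ m, w m * F₂ m j j) + c_f, where F₂ is built from G as above. Then Φ is permutation-equivariant: for every permutation σ of Fin n with permutation matrix P (P i j = 1 if σ i = j, else 0), Φ(P * G * Pᵀ) = Φ(G) ∘ σ. -/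
/-!
Conjugating by the permutation matrix of `σ` reindexes a matrix by `σ` on both sides. Every
operation of the network commutes with such a simultaneous reindexing: the entrywise maps
(`logb` and the ReLU layers) trivially, and multiplication by `E` because `E` is itself invariant
under it. The readout only looks at diagonal entries, so reindexing the input by `σ` reindexes
the output by `σ`.
-/

open Matrix

namespace Matrix

variable {ι α : Type*} [Fintype ι]

theorem permMatrix_mul_mul_transpose_permMatrix [DecidableEq ι] [NonAssocSemiring α]
    (σ : Equiv.Perm ι) (A : Matrix ι ι α) :
    σ.permMatrix α * A * (σ.permMatrix α)ᵀ = A.submatrix σ σ := by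
  rw [transpose_permMatrix, PEquiv.toMatrix_toPEquiv_mul, PEquiv.mul_toMatrix_toPEquiv]
  rfl

section InvariantFactor

variable [NonUnitalNonAssocSemiring α] {E : Matrix ι ι α} {σ : Equiv.Perm ι}

theorem mul_submatrix_of_submatrix_eq_self (hE : E.submatrix σ σ = E) (A : Matrix ι ι α) :
    E * A.submatrix σ σ = (E * A).submatrix σ σ := by
  conv_lhs => rw [← hE]
  exact submatrix_mul_equiv E A σ σ σ

theorem submatrix_mul_of_submatrix_eq_self (hE : E.submatrix σ σ = E) (A : Matrix ι ι α) :
    A.submatrix σ σ * E = (A * E).submatrix σ σ := by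
  conv_lhs => rw [← hE]
  exact submatrix_mul_equiv A E σ σ σ

end InvariantFactor

theorem apply_submatrix_of_entrywise {m n β : Type*} {T : Matrix m n α → Matrix m n β}
    {φ : α → β} (hT : ∀ A i j, T A i j = φ (A i j)) (A : Matrix m n α) (f : m → m)
    (g : n → n) : T (A.submatrix f g) = (T A).submatrix f g := by
  ext i j
  simp only [hT, submatrix_apply]

end Matrix

theorem stmt_12_general (n e : ℕ)
    (W : Fin 4 → Fin e → Fin 1 → ℝ) (c : Fin 4 → Fin e → ℝ)
    (w : Option (Fin 4 × Fin e) → ℝ) (cf : ℝ)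
    (J E : Matrix (Fin n) (Fin n) ℝ)
    (hJ : ∀ i j, J i j = 1)
    (hE : E = J - 1)
    (F1 : Matrix (Fin n) (Fin n) ℝ → Fin 1 → Matrix (Fin n) (Fin n) ℝ)
    (hF1 : ∀ G m, F1 G m = G.map (Real.logb 10))
    (R : Fin 4 → Matrix (Fin n) (Fin n) ℝ → Fin e → Matrix (Fin n) (Fin n) ℝ)
    (hR : ∀ k' G k i j, R k' G k i j = max 0 ((∑ m, W k' k m * F1 G m i j) + c k' k))
    (F2 : Matrix (Fin n) (Fin n) ℝ → Option (Fin 4 × Fin e) → Matrix (Fin n) (Fin n) ℝ)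
    (hF2none : ∀ G, F2 G none = G.map (Real.logb 10))
    (hF2c1 : ∀ G k, F2 G (some (0, k)) = R 0 G k)
    (hF2c2 : ∀ G k, F2 G (some (1, k)) = ((n : ℝ) - 1)⁻¹ • (E * R 1 G k))
    (hF2c3 : ∀ G k, F2 G (some (2, k)) = ((n : ℝ) - 1)⁻¹ • (R 2 G k * E))
    (hF2c4 : ∀ G k, F2 G (some (3, k)) = (((n : ℝ) - 1) ^ 2)⁻¹ • (E * R 3 G k * E))
    (Φ : Matrix (Fin n) (Fin n) ℝ → Fin n → ℝ)
    (hΦ : ∀ G j, Φ G j = (∑ m, w m * F2 G m j j) + cf)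
    (σ : Equiv.Perm (Fin n)) (P : Matrix (Fin n) (Fin n) ℝ)
    (hP : ∀ i j, P i j = if σ i = j then 1 else 0)
    (G : Matrix (Fin n) (Fin n) ℝ) :
    Φ (P * G * Pᵀ) = Φ G ∘ σ := by
  have hPσ : P = σ.permMatrix ℝ := by
    ext i j
    simp [hP, PEquiv.toMatrix_apply]
  have hEσ : E.submatrix σ σ = E := by
    ext i j
    simp [hE, hJ, one_apply]
  have hRσ : ∀ k' k, R k' (G.submatrix σ σ) k = (R k' G k).submatrix σ σ := fun k' k =>
    apply_submatrix_of_entrywise (T := fun G => R k' G k)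
      (φ := fun x => max 0 (W k' k 0 * Real.logb 10 x + c k' k)) (by simp [hR, hF1]) G σ σ
  have hF2σ : ∀ m, F2 (G.submatrix σ σ) m = (F2 G m).submatrix σ σ := by
    rintro (_ | ⟨k', k⟩)
    · simp only [hF2none, submatrix_map]
    · fin_cases k' <;>
        simp [hF2c1, hF2c2, hF2c3, hF2c4, hRσ, submatrix_smul,
          mul_submatrix_of_submatrix_eq_self hEσ, submatrix_mul_of_submatrix_eq_self hEσ]
  rw [hPσ, permMatrix_mul_mul_transpose_permMatrix]
  funext j
  simp only [hΦ, hF2σ, submatrix_apply, Function.comp_apply]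

theorem stmt_12 (n e : ℕ) (hn : 2 ≤ n) (he : 1 ≤ e)
    (W : Fin 4 → Fin e → Fin 1 → ℝ) (c : Fin 4 → Fin e → ℝ)
    (w : Option (Fin 4 × Fin e) → ℝ) (cf : ℝ)
    (J E : Matrix (Fin n) (Fin n) ℝ)
    (hJ : ∀ i j, J i j = 1)
    (hE : E = J - 1)
    (F1 : Matrix (Fin n) (Fin n) ℝ → Fin 1 → Matrix (Fin n) (Fin n) ℝ)
    (hF1 : ∀ G m, F1 G m = G.map (Real.logb 10))
    (R : Fin 4 → Matrix (Fin n) (Fin n) ℝ → Fin e → Matrix (Fin n) (Fin n) ℝ)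
    (hR : ∀ k' G k i j, R k' G k i j = max 0 ((∑ m, W k' k m * F1 G m i j) + c k' k))
    (F2 : Matrix (Fin n) (Fin n) ℝ → Option (Fin 4 × Fin e) → Matrix (Fin n) (Fin n) ℝ)
    (hF2none : ∀ G, F2 G none = G.map (Real.logb 10))
    (hF2c1 : ∀ G k, F2 G (some (0, k)) = R 0 G k)
    (hF2c2 : ∀ G k, F2 G (some (1, k)) = ((n : ℝ) - 1)⁻¹ • (E * R 1 G k))
    (hF2c3 : ∀ G k, F2 G (some (2, k)) = ((n : ℝ) - 1)⁻¹ • (R 2 G k * E))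
    (hF2c4 : ∀ G k, F2 G (some (3, k)) = (((n : ℝ) - 1) ^ 2)⁻¹ • (E * R 3 G k * E))
    (Φ : Matrix (Fin n) (Fin n) ℝ → Fin n → ℝ)
    (hΦ : ∀ G j, Φ G j = (∑ m, w m * F2 G m j j) + cf)
    (σ : Equiv.Perm (Fin n)) (P : Matrix (Fin n) (Fin n) ℝ)
    (hP : ∀ i j, P i j = if σ i = j then 1 else 0)
    (G : Matrix (Fin n) (Fin n) ℝ) :
    Φ (P * G * Pᵀ) = Φ G ∘ σ :=
  stmt_12_general n e W c w cf J E hJ hE F1 hF1 R hR F2 hF2none hF2c1 hF2c2 hF2c3 hF2c4 Φ hΦ σ P hP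
    G
end
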